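/- Let M > 0 and let G, H be probability measures supported on [−M, M]. Set f := (f_G + f_H)/2 and w := φ²/f. Then for every integer k ≥ 0 and every real polynomial p of degree at most k, ‖p'‖_{L²(w)} ≤ (2M+1) √(k+1) · ‖p‖_{L²(w)}. -/

import Mathlib

open MeasureTheory Real Filter

/-- The standard normal density. -/
noncomputable def gauss (y : ℝ) : ℝ := (Real.sqrt (2 * Real.pi))⁻¹ * Real.exp (-(y ^ 2) / 2)

/-- The Gaussian mixture density `f_G`. -/
noncomputable def mixDens (G : Measure ℝ) (y : ℝ) : ℝ := ∫ u, gauss (y - u) ∂G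

/-- The regret `Regret(H‖G)`. -/
noncomputable def regret (H G : Measure ℝ) : ℝ :=
  ∫ y, (deriv (mixDens G) y / mixDens G y - deriv (mixDens H) y / mixDens H y) ^ 2 * mixDens G y

/-- The squared Hellinger distance between `f_G` and `f_H`. -/
noncomputable def hellingerSq (G H : Measure ℝ) : ℝ :=
  ∫ y, (Real.sqrt (mixDens G y) - Real.sqrt (mixDens H y)) ^ 2

/-! Put `ν = (G + H) / 2`, so that `w = φ² / f_ν`. Then `w' = -s w` for the score
`s(y) = y + E[u | y]`, and `s' = 1 + Var(u | y) ≤ 1 + M²`, for the posterior of `u ~ ν` given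
`y = u + N(0,1)`. Integrating by parts in `L²(w)`,
`‖p'‖² = ⟨p, s p' - p''⟩` and `‖s p' - p''‖² = ⟨s' p', p'⟩ + ‖p''‖²`,
so Cauchy–Schwarz and induction on the degree give `‖p'‖² ≤ (1 + M²) k ‖p‖²`.
The Gaussian tail `w(y) ≤ C e^{-y²/4}` makes every integral finite. -/

open Polynomial
open scoped ENNReal

section CauchySchwarz

variable {α : Type*} [MeasurableSpace α] {μ : Measure α}

theorem sq_integral_mul_mul_le {w a b : α → ℝ} (hw : ∀ x, 0 ≤ w x)
    (ha : Integrable (fun x => a x ^ 2 * w x) μ) (hb : Integrable (fun x => b x ^ 2 * w x) μ)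
    (hab : Integrable (fun x => a x * b x * w x) μ) :
    (∫ x, a x * b x * w x ∂μ) ^ 2 ≤ (∫ x, a x ^ 2 * w x ∂μ) * ∫ x, b x ^ 2 * w x ∂μ := by
  have hquad : ∀ t : ℝ, 0 ≤ (∫ x, a x ^ 2 * w x ∂μ) * (t * t)
      + (2 * ∫ x, a x * b x * w x ∂μ) * t + ∫ x, b x ^ 2 * w x ∂μ := fun t => by
    have hsum : Integrable (fun x => t * t * (a x ^ 2 * w x) + 2 * t * (a x * b x * w x)) μ :=
      (ha.const_mul _).add (hab.const_mul _)
    calc (0 : ℝ) ≤ ∫ x, (t * a x + b x) ^ 2 * w x ∂μ :=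
          integral_nonneg fun x => mul_nonneg (sq_nonneg _) (hw x)
      _ = ∫ x, t * t * (a x ^ 2 * w x) + 2 * t * (a x * b x * w x) + b x ^ 2 * w x ∂μ := by
          congr 1; ext x; ring
      _ = _ := by
          rw [integral_add hsum hb, integral_add (ha.const_mul _) (hab.const_mul _),
            integral_const_mul, integral_const_mul]
          ring
  have := discrim_le_zero hquad
  rw [discrim] at this
  nlinarith

end CauchySchwarz

/-- For the standard Gaussian weight `w = φ`, the score is `s = id` and `s' = 1`; the bound
`IsScoreWeight.integral_derivative_sq_le` is then sharp on Hermite polynomials. -/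
structure IsScoreWeight (w s s' : ℝ → ℝ) : Prop where
  nonneg (y : ℝ) : 0 ≤ w y
  hasDerivAt (y : ℝ) : HasDerivAt w (-(s y * w y)) y
  hasDerivAt_score (y : ℝ) : HasDerivAt s (s' y) y
  integrable (q : ℝ[X]) : Integrable fun y => q.eval y * w y
  integrable_score (q : ℝ[X]) : Integrable fun y => s y * q.eval y * w y
  integrable_score_sq (q : ℝ[X]) : Integrable fun y => s y ^ 2 * q.eval y * w y
  integrable_deriv_score (q : ℝ[X]) : Integrable fun y => s' y * q.eval y * w y

namespace IsScoreWeight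

variable {w s s' : ℝ → ℝ}

theorem integrable_eval_mul (hw : IsScoreWeight w s s') (q r : ℝ[X]) :
    Integrable fun y => q.eval y * r.eval y * w y := by
  simpa using hw.integrable (q * r)

theorem integrable_eval_sq (hw : IsScoreWeight w s s') (q : ℝ[X]) :
    Integrable fun y => q.eval y ^ 2 * w y := by
  have h := hw.integrable (q ^ 2)
  simpa only [eval_pow] using h

theorem integral_derivative_mul (hw : IsScoreWeight w s s') (r : ℝ[X]) :
    ∫ y, (derivative r).eval y * w y = ∫ y, s y * r.eval y * w y := by
  have h := integral_eq_zero_of_hasDerivAt_of_integrable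
    (f' := fun y => (derivative r).eval y * w y - s y * r.eval y * w y)
    (fun y => ((r.hasDerivAt y).mul (hw.hasDerivAt y)).congr_deriv (by ring))
    ((hw.integrable _).sub (hw.integrable_score r)) (hw.integrable r)
  rwa [integral_sub (hw.integrable _) (hw.integrable_score r), sub_eq_zero] at h

theorem integral_deriv_score_add_integral_score_derivative (hw : IsScoreWeight w s s')
    (r : ℝ[X]) :
    (∫ y, s' y * r.eval y * w y) + ∫ y, s y * (derivative r).eval y * w y
      = ∫ y, s y ^ 2 * r.eval y * w y := by
  have hsr' : Integrable fun y => s y * (derivative r).eval y * w y := hw.integrable_score _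
  have hsum : Integrable fun y => s' y * r.eval y * w y + s y * (derivative r).eval y * w y :=
    (hw.integrable_deriv_score r).add hsr'
  have h := integral_eq_zero_of_hasDerivAt_of_integrable
    (f' := fun y => s' y * r.eval y * w y + s y * (derivative r).eval y * w y
      - s y ^ 2 * r.eval y * w y)
    (fun y => (((hw.hasDerivAt_score y).mul (r.hasDerivAt y)).mul (hw.hasDerivAt y)).congr_deriv
      (by simp only [Pi.mul_apply]; ring))
    (hsum.sub (hw.integrable_score_sq r)) (hw.integrable_score r)
  rwa [integral_sub hsum (hw.integrable_score_sq r), sub_eq_zero,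
    integral_add (hw.integrable_deriv_score r) hsr'] at h

theorem integrable_mul_score_mul_sub (hw : IsScoreWeight w s s') (p q r : ℝ[X]) :
    Integrable fun y => p.eval y * (s y * q.eval y - r.eval y) * w y := by
  refine ((hw.integrable_score (p * q)).sub (hw.integrable_eval_mul p r)).congr
    (Eventually.of_forall fun y => ?_)
  simp only [Pi.sub_apply, eval_mul]
  ring

theorem integrable_score_mul_sub_sq (hw : IsScoreWeight w s s') (q r : ℝ[X]) :
    Integrable fun y => (s y * q.eval y - r.eval y) ^ 2 * w y := by
  refine (((hw.integrable_score_sq (q ^ 2)).sub ((hw.integrable_score (q * r)).const_mul 2)).add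
    (hw.integrable (r ^ 2))).congr (Eventually.of_forall fun y => ?_)
  simp only [Pi.add_apply, Pi.sub_apply, eval_mul, eval_pow]
  ring

theorem integral_derivative_sq_eq (hw : IsScoreWeight w s s') (p : ℝ[X]) :
    ∫ y, (derivative p).eval y ^ 2 * w y
      = ∫ y, p.eval y * (s y * (derivative p).eval y - (derivative (derivative p)).eval y) * w y := by
  set q := derivative p
  set r := derivative q
  calc ∫ y, q.eval y ^ 2 * w y
      = ∫ y, (derivative (p * q)).eval y * w y - p.eval y * r.eval y * w y := by
        congr 1; ext y; simp only [derivative_mul, eval_add, eval_mul]; ring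
    _ = (∫ y, s y * (p * q).eval y * w y) - ∫ y, p.eval y * r.eval y * w y := by
        rw [integral_sub (hw.integrable _) (hw.integrable_eval_mul p r),
          hw.integral_derivative_mul]
    _ = ∫ y, p.eval y * (s y * q.eval y - r.eval y) * w y := by
        rw [← integral_sub (hw.integrable_score _) (hw.integrable_eval_mul p r)]
        congr 1; ext y; simp only [eval_mul]; ring

theorem integral_score_mul_sub_sq (hw : IsScoreWeight w s s') (q : ℝ[X]) :
    ∫ y, (s y * q.eval y - (derivative q).eval y) ^ 2 * w y
      = (∫ y, s' y * q.eval y ^ 2 * w y) + ∫ y, (derivative q).eval y ^ 2 * w y := by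
  have h := hw.integral_deriv_score_add_integral_score_derivative (q * q)
  have hs2 : Integrable fun y => s y ^ 2 * (q * q).eval y * w y := hw.integrable_score_sq _
  have hs1 : Integrable fun y => s y * (derivative (q * q)).eval y * w y := hw.integrable_score _
  have hdiff : Integrable fun y =>
      s y ^ 2 * (q * q).eval y * w y - s y * (derivative (q * q)).eval y * w y := hs2.sub hs1
  calc ∫ y, (s y * q.eval y - (derivative q).eval y) ^ 2 * w y
      = ∫ y, s y ^ 2 * (q * q).eval y * w y - s y * (derivative (q * q)).eval y * w y
          + (derivative q).eval y ^ 2 * w y := by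
        congr 1; ext y; simp only [derivative_mul, eval_add, eval_mul]; ring
    _ = (∫ y, s y ^ 2 * (q * q).eval y * w y) - (∫ y, s y * (derivative (q * q)).eval y * w y)
          + ∫ y, (derivative q).eval y ^ 2 * w y := by
        rw [integral_add hdiff (hw.integrable_eval_sq _), integral_sub hs2 hs1]
    _ = _ := by
        rw [← h]
        simp only [← sq, eval_pow, add_sub_cancel_right]

theorem integral_derivative_sq_le (hw : IsScoreWeight w s s') {c : ℝ} (hc : 0 ≤ c)
    (hs' : ∀ y, s' y ≤ c) {k : ℕ} {p : ℝ[X]} (hp : p.natDegree ≤ k) :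
    ∫ y, (derivative p).eval y ^ 2 * w y ≤ c * k * ∫ y, p.eval y ^ 2 * w y := by
  induction k generalizing p with
  | zero => simp [derivative_of_natDegree_zero (Nat.le_zero.1 hp)]
  | succ k ih =>
    have hnorm_nonneg (r : ℝ[X]) : 0 ≤ ∫ y, r.eval y ^ 2 * w y :=
      integral_nonneg fun y => mul_nonneg (sq_nonneg _) (hw.nonneg y)
    have hs'_le : ∫ y, s' y * (derivative p).eval y ^ 2 * w y
        ≤ c * ∫ y, (derivative p).eval y ^ 2 * w y := by
      have hs'p : Integrable fun y => s' y * (derivative p).eval y ^ 2 * w y := by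
        have h := hw.integrable_deriv_score (derivative p ^ 2)
        simpa only [eval_pow] using h
      rw [← integral_const_mul]
      refine integral_mono hs'p ((hw.integrable_eval_sq _).const_mul c) fun y => ?_
      rw [← mul_assoc]
      gcongr
      exacts [hw.nonneg y, hs' y]
    have hB : ∫ y, (s y * (derivative p).eval y - (derivative (derivative p)).eval y) ^ 2 * w y
        ≤ c * (k + 1) * ∫ y, (derivative p).eval y ^ 2 * w y := by
      rw [hw.integral_score_mul_sub_sq]
      nlinarith [ih ((natDegree_derivative_le p).trans (by omega))]
    have hCS := sq_integral_mul_mul_le hw.nonneg (hw.integrable_eval_sq p)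
      (hw.integrable_score_mul_sub_sq (derivative p) (derivative (derivative p)))
      (hw.integrable_mul_score_mul_sub p _ _)
    rw [← hw.integral_derivative_sq_eq] at hCS
    have le_of_sq_le_mul {x a : ℝ} (ha : 0 ≤ a) (h : x ^ 2 ≤ a * x) : x ≤ a := by nlinarith
    push_cast
    refine le_of_sq_le_mul (mul_nonneg (by positivity) (hnorm_nonneg p)) (hCS.trans ?_)
    nlinarith [mul_le_mul_of_nonneg_left hB (hnorm_nonneg p)]

end IsScoreWeight

theorem integrable_pow_mul_exp_neg_mul_sq {b : ℝ} (hb : 0 < b) (n : ℕ) :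
    Integrable fun x : ℝ => x ^ n * exp (-b * x ^ 2) := by
  simpa [Real.rpow_natCast] using
    integrable_rpow_mul_exp_neg_mul_sq hb (s := n) (by linarith [n.cast_nonneg (α := ℝ)])

theorem Polynomial.integrable_eval_mul_exp_neg_mul_sq {b : ℝ} (hb : 0 < b) (q : ℝ[X]) :
    Integrable fun x => q.eval x * exp (-b * x ^ 2) := by
  induction q using Polynomial.induction_on' with
  | add p q hp hq =>
    exact (hp.add hq).congr (Eventually.of_forall fun x => by simp [add_mul])
  | monomial n a => simpa [mul_assoc] using (integrable_pow_mul_exp_neg_mul_sq hb n).const_mul a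

section Gaussian

theorem gauss_pos (y : ℝ) : 0 < gauss y := by
  unfold gauss; positivity

@[fun_prop]
theorem continuous_gauss : Continuous gauss := by
  unfold gauss; fun_prop

theorem inv_sqrt_two_mul_pi_le_one : (√(2 * π))⁻¹ ≤ 1 :=
  inv_le_one_of_one_le₀ (Real.one_le_sqrt.2 (by linarith [pi_gt_three]))

theorem gauss_le_exp (y : ℝ) : gauss y ≤ exp (-(y ^ 2) / 2) :=
  mul_le_of_le_one_left (exp_pos _).le inv_sqrt_two_mul_pi_le_one

theorem gauss_le_one (y : ℝ) : gauss y ≤ 1 :=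
  (gauss_le_exp y).trans (exp_le_one_iff.2 (by nlinarith [sq_nonneg y]))

theorem integrable_gauss_sub {μ : Measure ℝ} [IsFiniteMeasure μ] (y : ℝ) :
    Integrable (fun u => gauss (y - u)) μ :=
  (integrable_const 1).mono' (by fun_prop) (Eventually.of_forall fun u => by
    rw [Real.norm_of_nonneg (gauss_pos _).le]; exact gauss_le_one _)

theorem abs_mul_gauss_le_one (y : ℝ) : |y| * gauss y ≤ 1 := by
  have hy : |y| ≤ exp (y ^ 2 / 2) := by
    nlinarith [add_one_le_exp (y ^ 2 / 2), sq_abs y, sq_nonneg (|y| - 1)]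
  calc |y| * gauss y ≤ exp (y ^ 2 / 2) * exp (-(y ^ 2) / 2) :=
        mul_le_mul hy (gauss_le_exp y) (gauss_pos y).le (exp_pos _).le
    _ = 1 := by rw [← exp_add]; ring_nf; exact exp_zero

theorem hasDerivAt_gauss (y : ℝ) : HasDerivAt gauss (-y * gauss y) y := by
  have hexponent : HasDerivAt (fun y : ℝ => -(y ^ 2) / 2) (-y) y := by
    simpa using ((hasDerivAt_pow 2 y).neg.div_const 2).congr_deriv (by ring)
  unfold gauss
  exact (hexponent.exp.const_mul _).congr_deriv (by ring)

theorem gauss_le_gauss {a b : ℝ} (h : |a| ≤ |b|) : gauss b ≤ gauss a := by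
  have : a ^ 2 ≤ b ^ 2 := sq_le_sq.2 h
  unfold gauss
  gcongr

theorem gauss_sq_div_gauss_abs_add_le (M y : ℝ) :
    gauss y ^ 2 / gauss (|y| + M) ≤ exp (3 * M ^ 2 / 2) * exp (-(1 / 4) * y ^ 2) := by
  set c := (√(2 * π))⁻¹
  have hratio : gauss y ^ 2 / gauss (|y| + M) = c * exp ((|y| + M) ^ 2 / 2 - y ^ 2) := by
    have hexp : exp ((|y| + M) ^ 2 / 2 - y ^ 2) * exp (-((|y| + M) ^ 2) / 2)
        = exp (-(y ^ 2) / 2) * exp (-(y ^ 2) / 2) := by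
      rw [← exp_add, ← exp_add]; ring_nf
    rw [div_eq_iff (gauss_pos _).ne', gauss, gauss]
    linear_combination (-c ^ 2) * hexp
  rw [hratio, ← exp_add]
  refine (mul_le_of_le_one_left (exp_pos _).le inv_sqrt_two_mul_pi_le_one).trans (exp_le_exp.2 ?_)
  nlinarith [sq_abs y, sq_nonneg (|y| - 2 * M)]

end Gaussian

noncomputable def gaussMoment (ν : Measure ℝ) (n : ℕ) (y : ℝ) : ℝ := ∫ u, u ^ n * gauss (y - u) ∂ν

section Mixture

variable {ν : Measure ℝ} {M : ℝ}

theorem gaussMoment_zero (ν : Measure ℝ) : gaussMoment ν 0 = mixDens ν := by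
  ext y; simp [gaussMoment, mixDens]

theorem nonneg_of_ae_abs_le [NeZero ν] (hν : ∀ᵐ u ∂ν, |u| ≤ M) : 0 ≤ M := by
  obtain ⟨u, hu⟩ := hν.exists
  exact (abs_nonneg u).trans hu

variable [IsFiniteMeasure ν]

theorem integrable_pow_mul_gauss_sub (hν : ∀ᵐ u ∂ν, |u| ≤ M) (n : ℕ) (y : ℝ) :
    Integrable (fun u => u ^ n * gauss (y - u)) ν := by
  refine Integrable.mono' (integrable_const (M ^ n)) (by fun_prop) ?_
  filter_upwards [hν] with u hu
  rw [norm_mul, norm_pow, Real.norm_eq_abs, Real.norm_of_nonneg (gauss_pos _).le]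
  exact mul_le_of_le_one_right (by positivity) (gauss_le_one _) |>.trans
    (pow_le_pow_left₀ (abs_nonneg u) hu n)

theorem hasDerivAt_gaussMoment (hν : ∀ᵐ u ∂ν, |u| ≤ M) (n : ℕ) (y : ℝ) :
    HasDerivAt (gaussMoment ν n) (-(y * gaussMoment ν n y) + gaussMoment ν (n + 1) y) y := by
  have hderiv := (hasDerivAt_integral_of_dominated_loc_of_deriv_le (μ := ν) (x₀ := y)
    (F := fun x u => u ^ n * gauss (x - u)) (F' := fun x u => u ^ n * (-(x - u) * gauss (x - u)))
    (bound := fun _ => M ^ n) univ_mem (Eventually.of_forall fun x => by fun_prop)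
    (integrable_pow_mul_gauss_sub hν n y) (by fun_prop) ?_ (integrable_const _) ?_).2
  · refine hderiv.congr_deriv ?_
    have hsplit : (fun u => u ^ n * (-(y - u) * gauss (y - u)))
        = fun u => -y * (u ^ n * gauss (y - u)) + u ^ (n + 1) * gauss (y - u) := by
      ext u; ring
    rw [hsplit, integral_add ((integrable_pow_mul_gauss_sub hν n y).const_mul _)
      (integrable_pow_mul_gauss_sub hν (n + 1) y), integral_const_mul]
    simp only [gaussMoment, neg_mul]
  · filter_upwards [hν] with u hu x _
    rw [norm_mul, norm_mul, norm_pow, norm_neg, Real.norm_eq_abs, Real.norm_eq_abs,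
      Real.norm_of_nonneg (gauss_pos _).le]
    exact mul_le_of_le_one_right (by positivity) (abs_mul_gauss_le_one _) |>.trans
      (pow_le_pow_left₀ (abs_nonneg u) hu n)
  · filter_upwards with u x _
    exact (((hasDerivAt_gauss (x - u)).comp x ((hasDerivAt_id x).sub_const u)).const_mul
      (u ^ n)).congr_deriv (by simp)

theorem continuous_gaussMoment (hν : ∀ᵐ u ∂ν, |u| ≤ M) (n : ℕ) : Continuous (gaussMoment ν n) :=
  continuous_iff_continuousAt.2 fun y => (hasDerivAt_gaussMoment hν n y).continuousAt

theorem abs_gaussMoment_le (hν : ∀ᵐ u ∂ν, |u| ≤ M) (n : ℕ) (y : ℝ) :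
    |gaussMoment ν n y| ≤ M ^ n * mixDens ν y := by
  rw [mixDens, ← integral_const_mul, ← Real.norm_eq_abs]
  refine norm_integral_le_of_norm_le ((integrable_gauss_sub y).const_mul _) ?_
  filter_upwards [hν] with u hu
  rw [norm_mul, norm_pow, Real.norm_eq_abs, Real.norm_of_nonneg (gauss_pos _).le]
  exact mul_le_mul_of_nonneg_right (pow_le_pow_left₀ (abs_nonneg u) hu n) (gauss_pos _).le

end Mixture

noncomputable def mixWeight (ν : Measure ℝ) (y : ℝ) : ℝ := gauss y ^ 2 / mixDens ν y

/-- `gaussMoment ν n y / mixDens ν y` is the posterior moment `E[uⁿ | y]` of `u ~ ν` observed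
through `y = u + N(0,1)`, so the score is `y + E[u | y]` and its derivative is `1 + Var(u | y)`. -/
noncomputable def mixScore (ν : Measure ℝ) (y : ℝ) : ℝ := y + gaussMoment ν 1 y / mixDens ν y

noncomputable def mixScoreDeriv (ν : Measure ℝ) (y : ℝ) : ℝ :=
  1 + gaussMoment ν 2 y / mixDens ν y - (gaussMoment ν 1 y / mixDens ν y) ^ 2

section MixtureWeight

variable {ν : Measure ℝ} [IsProbabilityMeasure ν] {M : ℝ}

theorem gauss_abs_add_le_mixDens (hν : ∀ᵐ u ∂ν, |u| ≤ M) (y : ℝ) :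
    gauss (|y| + M) ≤ mixDens ν y := by
  calc gauss (|y| + M) = ∫ _u, gauss (|y| + M) ∂ν := by simp
    _ ≤ ∫ u, gauss (y - u) ∂ν := by
      refine integral_mono_ae (integrable_const _) (integrable_gauss_sub y) ?_
      filter_upwards [hν] with u hu
      exact gauss_le_gauss ((abs_sub _ _).trans (by linarith [le_abs_self (|y| + M)]))

theorem mixDens_pos (hν : ∀ᵐ u ∂ν, |u| ≤ M) (y : ℝ) : 0 < mixDens ν y :=
  (gauss_pos _).trans_le (gauss_abs_add_le_mixDens hν y)

theorem hasDerivAt_mixDens (hν : ∀ᵐ u ∂ν, |u| ≤ M) (y : ℝ) :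
    HasDerivAt (mixDens ν) (-(y * mixDens ν y) + gaussMoment ν 1 y) y := by
  have h := hasDerivAt_gaussMoment hν 0 y
  rwa [gaussMoment_zero] at h

theorem hasDerivAt_mixWeight (hν : ∀ᵐ u ∂ν, |u| ≤ M) (y : ℝ) :
    HasDerivAt (mixWeight ν) (-(mixScore ν y * mixWeight ν y)) y := by
  have hf := (mixDens_pos hν y).ne'
  refine (((hasDerivAt_gauss y).pow 2).div (hasDerivAt_mixDens hν y) hf).congr_deriv ?_
  unfold mixScore mixWeight
  simp only [Pi.pow_apply]
  field_simp
  ring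

theorem hasDerivAt_mixScore (hν : ∀ᵐ u ∂ν, |u| ≤ M) (y : ℝ) :
    HasDerivAt (mixScore ν) (mixScoreDeriv ν y) y := by
  have hf := (mixDens_pos hν y).ne'
  refine ((hasDerivAt_id y).add ((hasDerivAt_gaussMoment hν 1 y).div
    (hasDerivAt_mixDens hν y) hf)).congr_deriv ?_
  unfold mixScoreDeriv
  field_simp
  ring

theorem abs_gaussMoment_div_mixDens_le (hν : ∀ᵐ u ∂ν, |u| ≤ M) (n : ℕ) (y : ℝ) :
    |gaussMoment ν n y / mixDens ν y| ≤ M ^ n := by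
  rw [abs_div, abs_of_pos (mixDens_pos hν y), div_le_iff₀ (mixDens_pos hν y)]
  exact abs_gaussMoment_le hν n y

theorem abs_mixScore_le (hν : ∀ᵐ u ∂ν, |u| ≤ M) (y : ℝ) :
    |mixScore ν y| ≤ (1 + M) * (1 + y ^ 2) := by
  have hM := nonneg_of_ae_abs_le hν
  have hmean := abs_gaussMoment_div_mixDens_le hν 1 y
  have hy : |y| ≤ 1 + y ^ 2 := by nlinarith [sq_abs y, sq_nonneg (|y| - 1)]
  refine (abs_add_le _ _).trans ?_
  nlinarith [sq_nonneg y]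

theorem mixScoreDeriv_le (hν : ∀ᵐ u ∂ν, |u| ≤ M) (y : ℝ) : mixScoreDeriv ν y ≤ 1 + M ^ 2 := by
  have h2 := (le_abs_self _).trans (abs_gaussMoment_div_mixDens_le hν 2 y)
  unfold mixScoreDeriv
  nlinarith [sq_nonneg (gaussMoment ν 1 y / mixDens ν y)]

theorem abs_mixScoreDeriv_le (hν : ∀ᵐ u ∂ν, |u| ≤ M) (y : ℝ) :
    |mixScoreDeriv ν y| ≤ 1 + 2 * M ^ 2 := by
  have h1 := abs_gaussMoment_div_mixDens_le hν 1 y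
  have h2 := abs_gaussMoment_div_mixDens_le hν 2 y
  have h1sq : (gaussMoment ν 1 y / mixDens ν y) ^ 2 ≤ M ^ 2 := by
    rw [← sq_abs]; exact pow_le_pow_left₀ (abs_nonneg _) (by simpa using h1) 2
  rw [abs_le] at h2 ⊢
  unfold mixScoreDeriv
  constructor <;> nlinarith [sq_nonneg (gaussMoment ν 1 y / mixDens ν y)]

theorem mixWeight_pos (hν : ∀ᵐ u ∂ν, |u| ≤ M) (y : ℝ) : 0 < mixWeight ν y :=
  div_pos (pow_pos (gauss_pos y) 2) (mixDens_pos hν y)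

theorem mixWeight_le (hν : ∀ᵐ u ∂ν, |u| ≤ M) (y : ℝ) :
    mixWeight ν y ≤ exp (3 * M ^ 2 / 2) * exp (-(1 / 4) * y ^ 2) :=
  (div_le_div_of_nonneg_left (by positivity) (gauss_pos _) (gauss_abs_add_le_mixDens hν y)).trans
    (gauss_sq_div_gauss_abs_add_le M y)

theorem continuous_mixWeight (hν : ∀ᵐ u ∂ν, |u| ≤ M) : Continuous (mixWeight ν) :=
  continuous_iff_continuousAt.2 fun y => (hasDerivAt_mixWeight hν y).continuousAt

theorem continuous_mixScore (hν : ∀ᵐ u ∂ν, |u| ≤ M) : Continuous (mixScore ν) :=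
  continuous_iff_continuousAt.2 fun y => (hasDerivAt_mixScore hν y).continuousAt

theorem continuous_mixScoreDeriv (hν : ∀ᵐ u ∂ν, |u| ≤ M) : Continuous (mixScoreDeriv ν) := by
  have hf : Continuous (mixDens ν) := gaussMoment_zero ν ▸ continuous_gaussMoment hν 0
  have hf0 (y : ℝ) : mixDens ν y ≠ 0 := (mixDens_pos hν y).ne'
  have hm1 := (continuous_gaussMoment hν 1).div hf hf0
  exact (continuous_const.add ((continuous_gaussMoment hν 2).div hf hf0)).sub (hm1.pow 2)

theorem integrable_mul_eval_mul_mixWeight (hν : ∀ᵐ u ∂ν, |u| ≤ M) {g : ℝ → ℝ}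
    (hg : Continuous g) {C : ℝ} {n : ℕ} (hgC : ∀ y, |g y| ≤ C * (1 + y ^ 2) ^ n) (q : ℝ[X]) :
    Integrable fun y => g y * q.eval y * mixWeight ν y := by
  have hdom := ((((1 + X ^ 2) ^ n * q).integrable_eval_mul_exp_neg_mul_sq
    (b := 1 / 4) (by norm_num)).abs).const_mul (C * exp (3 * M ^ 2 / 2))
  refine hdom.mono' ((hg.mul q.continuous).mul (continuous_mixWeight hν)).aestronglyMeasurable
    (Eventually.of_forall fun y => ?_)
  rw [norm_mul, norm_mul, Real.norm_eq_abs, Real.norm_eq_abs,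
    Real.norm_of_nonneg (mixWeight_pos hν y).le]
  simp only [eval_mul, eval_pow, eval_add, eval_one, eval_X, abs_mul, abs_pow,
    abs_of_pos (exp_pos _), abs_of_pos (by positivity : (0 : ℝ) < 1 + y ^ 2)]
  calc |g y| * |q.eval y| * mixWeight ν y
      ≤ C * (1 + y ^ 2) ^ n * |q.eval y| * (exp (3 * M ^ 2 / 2) * exp (-(1 / 4) * y ^ 2)) := by
        gcongr
        exacts [(mixWeight_pos hν y).le, mul_nonneg ((abs_nonneg _).trans (hgC y)) (abs_nonneg _),
          hgC y, mixWeight_le hν y]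
    _ = _ := by ring

theorem isScoreWeight_mixWeight (hν : ∀ᵐ u ∂ν, |u| ≤ M) :
    IsScoreWeight (mixWeight ν) (mixScore ν) (mixScoreDeriv ν) where
  nonneg y := (mixWeight_pos hν y).le
  hasDerivAt := hasDerivAt_mixWeight hν
  hasDerivAt_score := hasDerivAt_mixScore hν
  integrable q := by
    simpa using integrable_mul_eval_mul_mixWeight hν (g := fun _ => 1) continuous_const
      (C := 1) (n := 0) (by simp) q
  integrable_score := integrable_mul_eval_mul_mixWeight hν (continuous_mixScore hν)
    (n := 1) fun y => by simpa using abs_mixScore_le hν y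
  integrable_score_sq := integrable_mul_eval_mul_mixWeight hν ((continuous_mixScore hν).pow 2)
    (C := (1 + M) ^ 2) (n := 2) fun y => by
      rw [abs_pow]
      exact (pow_le_pow_left₀ (abs_nonneg _) (abs_mixScore_le hν y) 2).trans_eq (by ring)
  integrable_deriv_score := integrable_mul_eval_mul_mixWeight hν (continuous_mixScoreDeriv hν)
    (n := 0) fun y => by simpa using abs_mixScoreDeriv_le hν y

end MixtureWeight

theorem mixDens_smul_add (c : ℝ≥0∞) (G H : Measure ℝ) [IsFiniteMeasure G] [IsFiniteMeasure H]
    (y : ℝ) : mixDens (c • (G + H)) y = c.toReal * (mixDens G y + mixDens H y) := by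
  rw [mixDens, integral_smul_measure,
    integral_add_measure (integrable_gauss_sub y) (integrable_gauss_sub y), smul_eq_mul]
  rfl

theorem ae_abs_le_of_measure_compl_Icc {μ : Measure ℝ} {M : ℝ} (h : μ (Set.Icc (-M) M)ᶜ = 0) :
    ∀ᵐ u ∂μ, |u| ≤ M :=
  (measure_eq_zero_iff_ae_notMem.1 h).mono fun u hu => abs_le.2 (by simpa using hu)

theorem bernstein_weight_compact_general (M : ℝ)
    (G H : Measure ℝ) [IsProbabilityMeasure G] [IsProbabilityMeasure H]
    (hG : G (Set.Icc (-M) M)ᶜ = 0) (hH : H (Set.Icc (-M) M)ᶜ = 0)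
    (w : ℝ → ℝ) (hw : w = fun y => gauss y ^ 2 / ((mixDens G y + mixDens H y) / 2))
    (k : ℕ) (p : Polynomial ℝ) (hp : p.natDegree ≤ k) :
    Real.sqrt (∫ y, (Polynomial.derivative p).eval y ^ 2 * w y) ≤
      (2 * M + 1) * Real.sqrt ((k : ℝ) + 1) *
        Real.sqrt (∫ y, p.eval y ^ 2 * w y) := by
  set ν : Measure ℝ := (2⁻¹ : ℝ≥0∞) • (G + H)
  have : IsProbabilityMeasure ν := ⟨by
    simp [ν, ENNReal.inv_two_add_inv_two]⟩
  have hν : ∀ᵐ u ∂ν, |u| ≤ M := Measure.ae_smul_measure (ae_add_measure_iff.2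
    ⟨ae_abs_le_of_measure_compl_Icc hG, ae_abs_le_of_measure_compl_Icc hH⟩) _
  obtain rfl : w = mixWeight ν := by
    ext y
    rw [hw, mixWeight, mixDens_smul_add]
    norm_num [div_eq_inv_mul]
  have hM := nonneg_of_ae_abs_le hν
  have hbound := (isScoreWeight_mixWeight hν).integral_derivative_sq_le (by positivity)
    (mixScoreDeriv_le hν) hp
  have hconst : (1 + M ^ 2) * k ≤ ((2 * M + 1) * √((k : ℝ) + 1)) ^ 2 := by
    rw [mul_pow, Real.sq_sqrt (by positivity)]
    nlinarith
  have hnorm : 0 ≤ ∫ y, p.eval y ^ 2 * mixWeight ν y :=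
    integral_nonneg fun y => mul_nonneg (sq_nonneg _) (mixWeight_pos hν y).le
  rw [← Real.sqrt_sq (by positivity : 0 ≤ (2 * M + 1) * √((k : ℝ) + 1)),
    ← Real.sqrt_mul (sq_nonneg _)]
  exact Real.sqrt_le_sqrt (hbound.trans (mul_le_mul_of_nonneg_right hconst hnorm))

theorem bernstein_weight_compact (M : ℝ) (hM : 0 < M)
    (G H : Measure ℝ) [IsProbabilityMeasure G] [IsProbabilityMeasure H]
    (hG : G (Set.Icc (-M) M)ᶜ = 0) (hH : H (Set.Icc (-M) M)ᶜ = 0)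
    (w : ℝ → ℝ) (hw : w = fun y => gauss y ^ 2 / ((mixDens G y + mixDens H y) / 2))
    (k : ℕ) (p : Polynomial ℝ) (hp : p.natDegree ≤ k) :
    Real.sqrt (∫ y, (Polynomial.derivative p).eval y ^ 2 * w y) ≤
      (2 * M + 1) * Real.sqrt ((k : ℝ) + 1) *
        Real.sqrt (∫ y, p.eval y ^ 2 * w y) :=
  bernstein_weight_compact_general M G H hG hH w hw k p hp
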